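/- arXiv:2309.14215 — 5 statements merged into one kernel-verified Lean document; each statement's English description precedes it below -/
import Mathlib

section
/- Let E : [0,∞) → ℝ be nonnegative, nonincreasing and differentiable, and let D : [0,∞) → ℝ be nonnegative and continuous. Assume the energy–dissipation relation E'(t) ≤ −D(t) for every t ≥ 0. Then for every ε > 0 there exists a time T_g with 0 ≤ T_g ≤ (2/(3·√ε))·E(0)^{3/2} such that E(T_g)·D(T_g)² ≤ ε. -/
/-!
Along the evolution, `E^{3/2}` decreases at rate at least `(3/2)·√(E·D²)`, since
`d/dt E^{3/2} = (3/2)·E^{1/2}·E' ≤ -(3/2)·E^{1/2}·D`. If `E·D² > ε` held on the whole of `[0, T]`,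
the mean value theorem would make `E^{3/2}` drop by at least `(3/2)·√ε·T = E(0)^{3/2}` for
`T = E(0)^{3/2} / ((3/2)·√ε)`, forcing `E(T) = 0` and hence `E(T)·D(T)² = 0 ≤ ε`.
-/

open Set

theorem exists_mem_Icc_le_of_deriv_le_neg {φ g : ℝ → ℝ} {c : ℝ} (hc : 0 < c) (hφ0 : 0 ≤ φ 0)
    (hφ_diff : ∀ t ∈ Icc 0 (φ 0 / c), DifferentiableAt ℝ φ t)
    (hφ_deriv : ∀ t ∈ Icc 0 (φ 0 / c), deriv φ t ≤ -g t)
    (hg : ∀ t ∈ Icc 0 (φ 0 / c), φ t ≤ 0 → g t ≤ c) :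
    ∃ t ∈ Icc 0 (φ 0 / c), g t ≤ c := by
  set T := φ 0 / c
  have hT : 0 ≤ T := div_nonneg hφ0 hc.le
  by_contra! hlarge
  have hdrop : φ T - φ 0 ≤ -c * (T - 0) :=
    (convex_Icc 0 T).image_sub_le_mul_sub_of_deriv_le
      (fun t ht => (hφ_diff t ht).continuousAt.continuousWithinAt)
      (fun t ht => (hφ_diff t (interior_subset ht)).differentiableWithinAt)
      (fun t ht => (hφ_deriv t (interior_subset ht)).trans
        (neg_le_neg (hlarge t (interior_subset ht)).le))
      0 ⟨le_rfl, hT⟩ T ⟨hT, le_rfl⟩ hT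
  have hcT : c * T = φ 0 := mul_div_cancel₀ _ hc.ne'
  have hφT : φ T ≤ 0 := by linarith
  exact (hg T ⟨hT, le_rfl⟩ hφT).not_gt (hlarge T ⟨hT, le_rfl⟩)

theorem deriv_rpow_three_halves_le {E : ℝ → ℝ} {d t : ℝ} (hE : DifferentiableAt ℝ E t)
    (hEt : 0 ≤ E t) (hd : 0 ≤ d) (hEd : deriv E t ≤ -d) :
    deriv (fun s => E s ^ (3 / 2 : ℝ)) t ≤ -(3 / 2 * √(E t * d ^ 2)) := by
  rw [(hE.hasDerivAt.rpow_const (Or.inr (by norm_num))).deriv,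
    Real.sqrt_mul hEt, Real.sqrt_sq hd, Real.sqrt_eq_rpow,
    show (3 / 2 : ℝ) - 1 = 1 / 2 by norm_num]
  nlinarith [Real.rpow_nonneg hEt (1 / 2 : ℝ)]

theorem stmt0_general (E D : ℝ → ℝ)
    (hE_nonneg : ∀ t, 0 ≤ t → 0 ≤ E t)
    (hE_diff : ∀ t, 0 ≤ t → DifferentiableAt ℝ E t)
    (hD_nonneg : ∀ t, 0 ≤ t → 0 ≤ D t)
    (hED : ∀ t, 0 ≤ t → deriv E t ≤ - D t) :
    ∀ ε : ℝ, 0 < ε → ∃ T : ℝ, 0 ≤ T ∧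
      T ≤ 2 / (3 * Real.sqrt ε) * (E 0) ^ ((3:ℝ)/2) ∧
      E T * (D T) ^ 2 ≤ ε := by
  intro ε hε
  have hc : 0 < 3 / 2 * √ε := by positivity
  obtain ⟨T, hT_mem, hT_small⟩ := exists_mem_Icc_le_of_deriv_le_neg
    (φ := fun t => E t ^ (3 / 2 : ℝ)) (g := fun t => 3 / 2 * √(E t * D t ^ 2)) hc
    (Real.rpow_nonneg (hE_nonneg 0 le_rfl) _)
    (fun t ht => (hE_diff t ht.1).rpow_const (Or.inr (by norm_num)))
    (fun t ht => deriv_rpow_three_halves_le (hE_diff t ht.1) (hE_nonneg t ht.1)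
      (hD_nonneg t ht.1) (hED t ht.1))
    (fun t ht hφt => by
      have hEt : E t = 0 :=
        le_antisymm (not_lt.1 fun hpos => (Real.rpow_pos_of_pos hpos _).not_ge hφt)
          (hE_nonneg t ht.1)
      simp [hEt, hc.le])
  have hT_bound : E 0 ^ (3 / 2 : ℝ) / (3 / 2 * √ε) = 2 / (3 * √ε) * E 0 ^ ((3 : ℝ) / 2) := by
    field_simp
  rw [hT_bound] at hT_mem
  refine ⟨T, hT_mem.1, hT_mem.2, ?_⟩
  have hsqrt : √(E T * D T ^ 2) ≤ √ε := le_of_mul_le_mul_left hT_small (by norm_num)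
  exact (Real.sqrt_le_sqrt_iff hε.le).1 hsqrt

/-- Lemma 1.8: along any evolution with `E' ≤ -D`, the dimensionless quantity
`E·D²` drops below any `ε` within a time of order `E(0)^{3/2}`. -/
theorem stmt0 (E D : ℝ → ℝ)
    (hE_nonneg : ∀ t, 0 ≤ t → 0 ≤ E t)
    (hE_mono : AntitoneOn E (Set.Ici (0:ℝ)))
    (hE_diff : ∀ t, 0 ≤ t → DifferentiableAt ℝ E t)
    (hD_nonneg : ∀ t, 0 ≤ t → 0 ≤ D t)
    (hD_cont : Continuous D)
    (hED : ∀ t, 0 ≤ t → deriv E t ≤ - D t) :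
    ∀ ε : ℝ, 0 < ε → ∃ T : ℝ, 0 ≤ T ∧
      T ≤ 2 / (3 * Real.sqrt ε) * (E 0) ^ ((3:ℝ)/2) ∧
      E T * (D T) ^ 2 ≤ ε :=
  stmt0_general E D hE_nonneg hE_diff hD_nonneg hED
end

section
/- Let d ∈ {1,2} and C > 0. There exists ε₁ > 0, depending only on d and C, with the following property. Let T > 0 and let E, D : [0,T] → [0,∞) be differentiable functions satisfying E'(t) ≤ −D(t) and D'(t) ≤ C·D(t)^{(6−d)/(3−d)} for every t ∈ [0,T]. Then at every time t ∈ [0,T] at which E(t)^{3−d}·D(t)^{d} ≤ ε₁, the derivative of the function s ↦ E(s)^{3−d}·D(s)^{d} at s = t is nonpositive. -/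
/-!
With `a = 3 - d` and `b = d`, the exponent `(6 - d) / (3 - d)` is `2 + b / a`, the one making
`E ^ a * D ^ b` scale-invariant. The product rule and the two differential inequalities give
`(E ^ a D ^ b)' ≤ E ^ (a - 1) D ^ (b + 1) (b C (E ^ a D ^ b) ^ (1 / a) - a)`,
which is nonpositive as soon as `E ^ a D ^ b ≤ (a / (b C)) ^ a`.
-/

theorem rpow_two_add_div_eq_pow {a b : ℕ} (ha : a ≠ 0) {s : ℝ} (hs : 0 ≤ s) :
    (s ^ a) ^ (2 + b / a : ℝ) = s ^ (2 * a + b) := by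
  rw [← Real.rpow_natCast_mul hs, ← Real.rpow_natCast]
  congr 1
  push_cast
  field_simp

theorem product_rule_pow_mul_pow_nonpos {a b : ℕ} (ha : 0 < a) (hb : 0 < b)
    {C x y e f : ℝ} (hC : 0 < C) (hx : 0 ≤ x) (hy : 0 ≤ y) (he : e ≤ -y)
    (hf : f ≤ C * y ^ (2 + b / a : ℝ))
    (hsmall : x ^ a * y ^ b ≤ (a / (b * C)) ^ a) :
    a * x ^ (a - 1) * e * y ^ b + x ^ a * (b * y ^ (b - 1) * f) ≤ 0 := by
  -- Writing `y = s ^ a` turns `y ^ (2 + b / a)` into the natural power `s ^ (2 * a + b)`.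
  obtain ⟨s, hs, rfl⟩ : ∃ s, 0 ≤ s ∧ y = s ^ a :=
    ⟨y ^ ((a : ℝ)⁻¹), Real.rpow_nonneg hy _, (Real.rpow_inv_natCast_pow hy ha.ne').symm⟩
  rw [rpow_two_add_div_eq_pow ha.ne' hs] at hf
  rw [← pow_mul, mul_comm a b, pow_mul, ← mul_pow,
    pow_le_pow_iff_left₀ (by positivity) (by positivity) ha.ne',
    le_div_iff₀' (by positivity)] at hsmall
  obtain ⟨k, rfl⟩ := Nat.exists_eq_add_of_lt ha
  obtain ⟨m, rfl⟩ := Nat.exists_eq_add_of_lt hb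
  simp only [zero_add, Nat.add_sub_cancel] at *
  push_cast at *
  calc _ ≤ (k + 1) * x ^ k * (-s ^ (k + 1)) * (s ^ (k + 1)) ^ (m + 1)
        + x ^ (k + 1) * ((m + 1) * (s ^ (k + 1)) ^ m * (C * s ^ (2 * (k + 1) + (m + 1)))) := by
        gcongr
    _ = x ^ k * (s ^ (k + 1)) ^ (m + 2) * ((m + 1) * C * (x * s ^ (m + 1)) - (k + 1)) := by ring
    _ ≤ 0 := mul_nonpos_of_nonneg_of_nonpos (by positivity) (by linarith)

theorem deriv_pow_mul_pow_nonpos_of_energy_dissipation {a b : ℕ} (ha : 0 < a) (hb : 0 < b)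
    {C : ℝ} (hC : 0 < C) {E D : ℝ → ℝ} {t : ℝ} (hE : DifferentiableAt ℝ E t)
    (hD : DifferentiableAt ℝ D t) (hE0 : 0 ≤ E t) (hD0 : 0 ≤ D t) (hE' : deriv E t ≤ -D t)
    (hD' : deriv D t ≤ C * D t ^ (2 + b / a : ℝ))
    (hsmall : E t ^ a * D t ^ b ≤ (a / (b * C)) ^ a) :
    deriv (fun s => E s ^ a * D s ^ b) t ≤ 0 := by
  rw [((hE.hasDerivAt.fun_pow a).fun_mul (hD.hasDerivAt.fun_pow b)).deriv]
  exact product_rule_pow_mul_pow_nonpos ha hb hC hE0 hD0 hE' hD' hsmall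

/-- Lemma 5.8: smallness of the dimensionless quantity `E^{3-d}·D^d` is preserved
under `E' ≤ -D` and `D' ≤ C·D^{(6-d)/(3-d)}` for `d ∈ {1,2}`. -/
theorem stmt2 (d : ℕ) (hd : d = 1 ∨ d = 2) (C : ℝ) (hC : 0 < C) :
    ∃ ε₁ : ℝ, 0 < ε₁ ∧ ∀ (T : ℝ) (E D : ℝ → ℝ), 0 < T →
      (∀ t ∈ Set.Icc (0:ℝ) T, 0 ≤ E t) →
      (∀ t ∈ Set.Icc (0:ℝ) T, 0 ≤ D t) →
      (∀ t ∈ Set.Icc (0:ℝ) T, DifferentiableAt ℝ E t) →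
      (∀ t ∈ Set.Icc (0:ℝ) T, DifferentiableAt ℝ D t) →
      (∀ t ∈ Set.Icc (0:ℝ) T, deriv E t ≤ - D t) →
      (∀ t ∈ Set.Icc (0:ℝ) T,
        deriv D t ≤ C * D t ^ ((6 - (d:ℝ))/(3 - (d:ℝ)))) →
      ∀ t ∈ Set.Icc (0:ℝ) T, E t ^ (3 - d) * D t ^ d ≤ ε₁ →
        deriv (fun s => E s ^ (3 - d) * D s ^ d) t ≤ 0 := by
  have ha : 0 < 3 - d := by omega
  have hb : 0 < d := by omega
  have hexp : (6 - (d : ℝ)) / (3 - d) = 2 + (d : ℝ) / ((3 - d : ℕ) : ℝ) := by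
    rcases hd with rfl | rfl <;> norm_num
  refine ⟨((3 - d : ℕ) / (d * C)) ^ (3 - d), by positivity, ?_⟩
  intro T E D _ hE0 hD0 hE hD hE' hD' t ht hsmall
  rw [hexp] at hD'
  exact deriv_pow_mul_pow_nonpos_of_energy_dissipation ha hb hC (hE t ht) (hD t ht) (hE0 t ht)
    (hD0 t ht) (hE' t ht) (hD' t ht) hsmall
end

section
/- For every C ≥ 1 there exist constants c₁ > 0 and C₂ < ∞, depending only on C, with the following property. Let T > 0 and let E : [0,T] → [0,∞) and D : [0,T] → (0,∞) be differentiable functions satisfying E'(t) ≤ −D(t) and D'(t) ≤ C·D(t)⁴ for all t ∈ [0,T]. Then for every t ∈ [0,T] with t ≥ c₁·E(0)^{3/2} one has D(t) ≤ C₂·E(t/2)/t. -/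
/-!
Along the flow `(D ^ 3)⁻¹ + 3 C t` is nondecreasing, so `D` cannot have been much smaller
before time `t` than it is at `t`: a lower bound `m ≤ D` holds on `[a, t]` as soon as
`(D t ^ 3)⁻¹ + 3 C (t - a) ≤ (m ^ 3)⁻¹`, and then `m (t - a) ≤ E a - E t ≤ E a`. If `3 C t ≤ (D t ^ 3)⁻¹`, this applies on `[t/2, t]` with `m = D t / 2`
and gives `D t ≤ 4 E (t/2) / t`. Otherwise it applies on `[0, t]` with `m = 1.1 E 0 / t`,
which is incompatible with `t ≥ 3 C E 0 ^ (3/2)`.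
-/

open Set

section

variable {a b : ℝ}

lemma mul_sub_le_sub_of_deriv_le_neg {E D : ℝ → ℝ} {m : ℝ}
    (hE : ∀ x ∈ Icc a b, DifferentiableAt ℝ E x) (hE' : ∀ x ∈ Icc a b, deriv E x ≤ -D x)
    (hm : ∀ x ∈ Icc a b, m ≤ D x) (hab : a ≤ b) :
    m * (b - a) ≤ E a - E b := by
  have := (convex_Icc a b).image_sub_le_mul_sub_of_deriv_le
    (fun x hx => (hE x hx).continuousAt.continuousWithinAt)
    (fun x hx => (hE x (interior_subset hx)).differentiableWithinAt)
    (fun x hx => (hE' x (interior_subset hx)).trans (neg_le_neg (hm x (interior_subset hx))))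
    a (left_mem_Icc.2 hab) b (right_mem_Icc.2 hab) hab
  linarith

lemma image_lt_of_deriv_le_neg {E D : ℝ → ℝ} (hab : a < b)
    (hE : ∀ x ∈ Icc a b, DifferentiableAt ℝ E x) (hD : ∀ x ∈ Icc a b, 0 < D x)
    (hE' : ∀ x ∈ Icc a b, deriv E x ≤ -D x) :
    E b < E a :=
  strictAntiOn_of_deriv_neg (convex_Icc a b)
    (fun x hx => (hE x hx).continuousAt.continuousWithinAt)
    (fun x hx => by
      rw [interior_Icc] at hx
      linarith [hE' x (Ioo_subset_Icc_self hx), hD x (Ioo_subset_Icc_self hx)])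
    (left_mem_Icc.2 hab.le) (right_mem_Icc.2 hab.le) hab

lemma inv_pow_three_le_of_deriv_le_mul_pow_four {D : ℝ → ℝ} {C : ℝ}
    (hD : ∀ x ∈ Icc a b, 0 < D x) (hDd : ∀ x ∈ Icc a b, DifferentiableAt ℝ D x)
    (hD' : ∀ x ∈ Icc a b, deriv D x ≤ C * D x ^ 4) {s : ℝ} (hs : s ∈ Icc a b) :
    (D s ^ 3)⁻¹ ≤ (D b ^ 3)⁻¹ + 3 * C * (b - s) := by
  have hderiv : ∀ x ∈ Icc a b, HasDerivAt (fun y => (D y ^ 3)⁻¹)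
      (-(3 * D x ^ 2 * deriv D x) / (D x ^ 3) ^ 2) x := fun x hx => by
    simpa using ((hDd x hx).hasDerivAt.fun_pow 3).fun_inv (pow_pos (hD x hx) 3).ne'
  have hderiv_ge :
      ∀ x ∈ interior (Icc a b), -(3 * C) ≤ deriv (fun y => (D y ^ 3)⁻¹) x := by
    intro x hx
    have hx := interior_subset hx
    have hDx := hD x hx
    rw [(hderiv x hx).deriv, le_div_iff₀ (by positivity)]
    nlinarith [hD' x hx, pow_pos hDx 2]
  have := (convex_Icc a b).mul_sub_le_image_sub_of_le_deriv
    (fun x hx => (hderiv x hx).continuousAt.continuousWithinAt)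
    (fun x hx => (hderiv x (interior_subset hx)).differentiableAt.differentiableWithinAt)
    hderiv_ge s hs b (right_mem_Icc.2 (hs.1.trans hs.2)) hs.2
  linarith

lemma le_of_deriv_le_mul_pow_four {D : ℝ → ℝ} {C m : ℝ} (hC : 0 ≤ C) (hm : 0 < m)
    (hD : ∀ x ∈ Icc a b, 0 < D x) (hDd : ∀ x ∈ Icc a b, DifferentiableAt ℝ D x)
    (hD' : ∀ x ∈ Icc a b, deriv D x ≤ C * D x ^ 4)
    (hbound : (D b ^ 3)⁻¹ + 3 * C * (b - a) ≤ (m ^ 3)⁻¹) {s : ℝ} (hs : s ∈ Icc a b) :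
    m ≤ D s := by
  have hDs := hD s hs
  have hinv : (D s ^ 3)⁻¹ ≤ (m ^ 3)⁻¹ := calc
    (D s ^ 3)⁻¹ ≤ (D b ^ 3)⁻¹ + 3 * C * (b - s) :=
      inv_pow_three_le_of_deriv_le_mul_pow_four hD hDd hD' hs
    _ ≤ (D b ^ 3)⁻¹ + 3 * C * (b - a) := by gcongr; exact hs.1
    _ ≤ (m ^ 3)⁻¹ := hbound
  rw [inv_le_inv₀ (by positivity) (by positivity)] at hinv
  exact (pow_le_pow_iff_left₀ hm.le hDs.le three_ne_zero).1 hinv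

lemma mul_sub_le_of_deriv_le_neg_of_deriv_le_mul_pow_four {E D : ℝ → ℝ} {C m : ℝ}
    (hC : 0 ≤ C) (hm : 0 < m) (hab : a ≤ b) (hEb : 0 ≤ E b) (hD : ∀ x ∈ Icc a b, 0 < D x)
    (hEd : ∀ x ∈ Icc a b, DifferentiableAt ℝ E x)
    (hDd : ∀ x ∈ Icc a b, DifferentiableAt ℝ D x)
    (hE' : ∀ x ∈ Icc a b, deriv E x ≤ -D x) (hD' : ∀ x ∈ Icc a b, deriv D x ≤ C * D x ^ 4)
    (hbound : (D b ^ 3)⁻¹ + 3 * C * (b - a) ≤ (m ^ 3)⁻¹) :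
    m * (b - a) ≤ E a := by
  have := mul_sub_le_sub_of_deriv_le_neg hEd hE'
    (fun x hx => le_of_deriv_le_mul_pow_four hC hm hD hDd hD' hbound hx) hab
  linarith

end

lemma Real.rpow_three_halves_sq {x : ℝ} (hx : 0 ≤ x) : (x ^ ((3 : ℝ) / 2)) ^ 2 = x ^ 3 := by
  rw [← Real.rpow_mul_natCast hx]
  norm_num

lemma inv_pow_three_add_le_inv_half_pow_three {x c t : ℝ} (hx : 0 < x)
    (h : c * t ≤ (x ^ 3)⁻¹) :
    (x ^ 3)⁻¹ + c * (t - t / 2) ≤ ((x / 2) ^ 3)⁻¹ := by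
  have hhalf : ((x / 2) ^ 3)⁻¹ = 8 * (x ^ 3)⁻¹ := by rw [div_pow, inv_div]; ring
  linarith [inv_pos.2 (pow_pos hx 3), show c * (t - t / 2) = c * t / 2 by ring]

lemma add_le_inv_pow_three_of_mul_rpow_three_halves_le {C e t y : ℝ} (hC : 1 ≤ C) (he : 0 < e)
    (ht : 3 * C * e ^ ((3 : ℝ) / 2) ≤ t) (hy : y < 3 * C * t) :
    y + 3 * C * t ≤ ((11 / 10 * e / t) ^ 3)⁻¹ := by
  have ht0 : 0 < t := lt_of_lt_of_le (by positivity) ht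
  have hsq : 9 * C ^ 2 * e ^ 3 ≤ t ^ 2 := by
    have := pow_le_pow_left₀ (by positivity) ht 2
    rw [mul_pow, Real.rpow_three_halves_sq he.le] at this
    linarith
  rw [div_pow, inv_div, le_div_iff₀ (by positivity)]
  calc (y + 3 * C * t) * (11 / 10 * e) ^ 3
      ≤ 6 * C * t * (11 / 10 * e) ^ 3 := by gcongr; linarith
    _ ≤ 9 * C ^ 2 * e ^ 3 * t := by
      have hCte : 0 ≤ C * t * e ^ 3 := by positivity
      nlinarith [mul_le_mul_of_nonneg_right hC hCte]
    _ ≤ t ^ 2 * t := by gcongr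
    _ = t ^ 3 := by ring

/-- Lemma 5.9 (case d = 2): from `E' ≤ -D` and `D' ≤ C·D⁴` one deduces the decay
`D(t) ≤ C₂·E(t/2)/t` for all `t ≥ c₁·E(0)^{3/2}`. -/
theorem stmt3 (C : ℝ) (hC : 1 ≤ C) :
    ∃ c₁ C₂ : ℝ, 0 < c₁ ∧ 0 < C₂ ∧ ∀ (T : ℝ) (E D : ℝ → ℝ), 0 < T →
      (∀ t ∈ Set.Icc (0:ℝ) T, 0 ≤ E t) →
      (∀ t ∈ Set.Icc (0:ℝ) T, 0 < D t) →
      (∀ t ∈ Set.Icc (0:ℝ) T, DifferentiableAt ℝ E t) →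
      (∀ t ∈ Set.Icc (0:ℝ) T, DifferentiableAt ℝ D t) →
      (∀ t ∈ Set.Icc (0:ℝ) T, deriv E t ≤ - D t) →
      (∀ t ∈ Set.Icc (0:ℝ) T, deriv D t ≤ C * D t ^ 4) →
      ∀ t ∈ Set.Icc (0:ℝ) T, c₁ * E 0 ^ ((3:ℝ)/2) ≤ t →
        D t ≤ C₂ * E (t / 2) / t := by
  have hC0 : 0 < C := by linarith
  refine ⟨3 * C, 4, by positivity, by norm_num, ?_⟩
  intro T E D hT hE hD hEd hDd hE' hD' t ht hct
  have hE0 : 0 < E 0 :=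
    (hE T (right_mem_Icc.2 hT.le)).trans_lt (image_lt_of_deriv_le_neg hT hEd hD hE')
  have ht0 : 0 < t := lt_of_lt_of_le (by positivity) hct
  have hDt := hD t ht
  have hcost : ∀ a m, 0 ≤ a → a ≤ t → 0 < m →
      (D t ^ 3)⁻¹ + 3 * C * (t - a) ≤ (m ^ 3)⁻¹ → m * (t - a) ≤ E a := by
    intro a m ha hat hm hbound
    have hsub : Icc a t ⊆ Icc 0 T := Icc_subset_Icc ha ht.2
    exact mul_sub_le_of_deriv_le_neg_of_deriv_le_mul_pow_four hC0.le hm hat (hE t ht)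
      (fun x hx => hD x (hsub hx)) (fun x hx => hEd x (hsub hx)) (fun x hx => hDd x (hsub hx))
      (fun x hx => hE' x (hsub hx)) (fun x hx => hD' x (hsub hx)) hbound
  rcases le_or_gt (3 * C * t) (D t ^ 3)⁻¹ with hsmall | hlarge
  · have := hcost (t / 2) (D t / 2) (by positivity) (by linarith) (by positivity)
      (inv_pow_three_add_le_inv_half_pow_three hDt hsmall)
    rw [le_div_iff₀ ht0]
    linarith
  · have := hcost 0 (11 / 10 * E 0 / t) le_rfl ht0.le (by positivity)
      (by rw [sub_zero]; exact add_le_inv_pow_three_of_mul_rpow_three_halves_le hC hE0 hct hlarge)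
    linarith [div_mul_cancel₀ (11 / 10 * E 0) ht0.ne']
end

section
/- Let d ≥ 1 be an integer and let h : ℝ^d → ℝ be a Schwartz function with |∇h(x)| ≤ 1 for every x ∈ ℝ^d. Define the mean curvature of the graph of h by H(x) = (1+|∇h(x)|²)^{−1/2}·( Δh(x) − ⟨∇²h(x)·∇h(x), ∇h(x)⟩/(1+|∇h(x)|²) ), where ∇²h denotes the Hessian. Then ‖∇²h‖_{L²(ℝ^d)} ≤ 2√2·‖H‖_{L²(ℝ^d)}, where the pointwise norm of the Hessian is the Frobenius (Hilbert–Schmidt) norm. -/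
/-!
Integrating by parts twice and using the symmetry of second derivatives gives
`∫ (∂ᵢ∂ⱼh)² = ∫ ∂ᵢ∂ᵢh · ∂ⱼ∂ⱼh`, so the Hessian and the Laplacian have the same `L²` norm.
Pointwise, `Δh = √(1 + |∇h|²) H + u` with `u = ⟨∇²h ∇h, ∇h⟩ / (1 + |∇h|²)`; Cauchy–Schwarz and
`|∇h|² / (1 + |∇h|²) ≤ 1/2` give `u² ≤ |∇²h|² / 4`, hence `(Δh)² ≤ 4 H² + |∇²h|² / 2`.
Integrating, `‖∇²h‖² ≤ 4 ‖H‖² + ‖∇²h‖² / 2`, and the last term is absorbed.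
-/

open MeasureTheory SchwartzMap LineDeriv Laplacian

/-- The (i,j) entry of the Hessian of `h : ℝ^d → ℝ`. -/
noncomputable def hessEntry (d : ℕ) (h : EuclideanSpace ℝ (Fin d) → ℝ)
    (x : EuclideanSpace ℝ (Fin d)) (i j : Fin d) : ℝ :=
  fderiv ℝ (fun y => fderiv ℝ h y (EuclideanSpace.single i (1:ℝ))) x
    (EuclideanSpace.single j (1:ℝ))

theorem sq_sum_sum_mul_mul_le {ι : Type*} (s : Finset ι) (A : ι → ι → ℝ) (g : ι → ℝ) :
    (∑ i ∈ s, ∑ j ∈ s, A i j * g i * g j) ^ 2 ≤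
      (∑ i ∈ s, ∑ j ∈ s, A i j ^ 2) * (∑ i ∈ s, g i ^ 2) ^ 2 := by
  rw [sq (∑ i ∈ s, g i ^ 2), Finset.sum_mul_sum, ← Finset.sum_product', ← Finset.sum_product',
    ← Finset.sum_product']
  simpa only [mul_assoc, ← mul_pow] using
    Finset.sum_mul_sq_le_sq_mul_sq (s ×ˢ s) (fun p => A p.1 p.2) (fun p => g p.1 * g p.2)

theorem sq_div_one_add_le {S F s : ℝ} (hs0 : 0 ≤ s) (hs1 : s ≤ 1) (hS : S ^ 2 ≤ F * s ^ 2)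
    (hF : 0 ≤ F) : (S / (1 + s)) ^ 2 ≤ F / 4 := by
  rw [div_pow, div_le_div_iff₀ (by positivity) (by norm_num)]
  nlinarith [mul_le_mul_of_nonneg_left (by nlinarith : 4 * s ^ 2 ≤ (1 + s) ^ 2) hF]

theorem sq_rpow_neg_one_half {q : ℝ} (hq : 0 ≤ q) : (q ^ (-(1:ℝ)/2)) ^ 2 = q⁻¹ := by
  rw [← Real.rpow_natCast, ← Real.rpow_mul hq]
  norm_num [Real.rpow_neg_one]

theorem sq_le_four_mul_sq_rpow_neg_one_half_mul_add {T u q F : ℝ} (hq1 : 1 ≤ q) (hq2 : q ≤ 2)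
    (hu : u ^ 2 ≤ F / 4) : T ^ 2 ≤ 4 * (q ^ (-(1:ℝ)/2) * (T - u)) ^ 2 + F / 2 := by
  rw [mul_pow, sq_rpow_neg_one_half (by linarith)]
  have hq : 2⁻¹ ≤ q⁻¹ := inv_anti₀ (by linarith) hq2
  nlinarith [sq_nonneg (T - 2 * u), mul_le_mul_of_nonneg_right hq (sq_nonneg (T - u))]

theorem sq_rpow_neg_one_half_mul_le {T u q F : ℝ} (hq1 : 1 ≤ q) (hu : u ^ 2 ≤ F / 4) :
    (q ^ (-(1:ℝ)/2) * (T - u)) ^ 2 ≤ 2 * T ^ 2 + F / 2 := by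
  rw [mul_pow, sq_rpow_neg_one_half (by linarith)]
  have hq : q⁻¹ ≤ 1 := inv_le_one_of_one_le₀ hq1
  nlinarith [sq_nonneg (T + u), mul_le_mul_of_nonneg_right hq (sq_nonneg (T - u))]

namespace SchwartzMap

section NormedSpace

variable {E F : Type*} [NormedAddCommGroup E] [NormedSpace ℝ E]
  [NormedAddCommGroup F] [NormedSpace ℝ F]

theorem lineDerivOp_lineDerivOp_comm (f : 𝓢(E, F)) (v w : E) :
    ∂_{v} (∂_{w} f) = ∂_{w} (∂_{v} f) := by
  ext x
  have hsymm : IsSymmSndFDerivAt ℝ f x := (f.smooth 2).contDiffAt.isSymmSndFDerivAt (by simp)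
  have hiter (a b : E) : ∂_{a} (∂_{b} f) x = iteratedFDeriv ℝ 2 f x ![a, b] :=
    iteratedLineDerivOp_eq_iteratedFDeriv (m := ![a, b])
  rw [hiter, hiter, hsymm.iteratedFDeriv_cons]

variable [MeasurableSpace E] [BorelSpace E] [FiniteDimensional ℝ E]
  {μ : Measure E} [μ.IsAddHaarMeasure]

theorem integrable_mul (f g : 𝓢(E, ℝ)) : Integrable (fun x => f x * g x) μ :=
  (f.memLp 2 μ).integrable_mul (g.memLp 2 μ)

theorem integrable_sq (f : 𝓢(E, ℝ)) : Integrable (fun x => f x ^ 2) μ := by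
  simpa only [sq] using f.integrable_mul f

theorem integral_lineDerivOp_lineDerivOp_sq (f : 𝓢(E, ℝ)) (v w : E) :
    ∫ x, (∂_{v} (∂_{w} f) x) ^ 2 ∂μ = ∫ x, ∂_{v} (∂_{v} f) x * ∂_{w} (∂_{w} f) x ∂μ := by
  calc ∫ x, (∂_{v} (∂_{w} f) x) ^ 2 ∂μ
      = ∫ x, ∂_{v} (∂_{w} f) x * ∂_{v} (∂_{w} f) x ∂μ := by simp_rw [sq]
    _ = -∫ x, ∂_{w} (∂_{v} (∂_{v} f)) x * ∂_{w} f x ∂μ := by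
      rw [integral_mul_lineDerivOp_right_eq_neg_left, lineDerivOp_lineDerivOp_comm f v w,
        lineDerivOp_lineDerivOp_comm (∂_{v} f)]
    _ = ∫ x, ∂_{v} (∂_{v} f) x * ∂_{w} (∂_{w} f) x ∂μ := by
      rw [integral_mul_lineDerivOp_right_eq_neg_left (∂_{v} (∂_{v} f)) (∂_{w} f) w]

end NormedSpace

variable {E : Type*} [NormedAddCommGroup E] [InnerProductSpace ℝ E] [FiniteDimensional ℝ E]
  [MeasurableSpace E] [BorelSpace E] {μ : Measure E} [μ.IsAddHaarMeasure]
  {ι : Type*} [Fintype ι]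

theorem integral_sum_sum_lineDerivOp_sq_eq_integral_laplacian_sq
    (b : OrthonormalBasis ι ℝ E) (f : 𝓢(E, ℝ)) :
    ∫ x, ∑ i, ∑ j, (∂_{b j} (∂_{b i} f) x) ^ 2 ∂μ = ∫ x, (Δ f x) ^ 2 ∂μ := by
  have hΔ (x : E) : (Δ f x) ^ 2 = ∑ i, ∑ j, ∂_{b j} (∂_{b j} f) x * ∂_{b i} (∂_{b i} f) x := by
    rw [laplacian_eq_sum b, sum_apply, sq, Finset.sum_mul_sum, Finset.sum_comm]
  simp_rw [hΔ]
  rw [integral_finsetSum _ fun i _ => integrable_finsetSum _ fun j _ => integrable_sq _,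
    integral_finsetSum _ fun i _ => integrable_finsetSum _ fun j _ => integrable_mul _ _]
  refine Finset.sum_congr rfl fun i _ => ?_
  rw [integral_finsetSum _ fun j _ => integrable_sq _,
    integral_finsetSum _ fun j _ => integrable_mul _ _]
  exact Finset.sum_congr rfl fun j _ => integral_lineDerivOp_lineDerivOp_sq f (b j) (b i)

end SchwartzMap

theorem OrthonormalBasis.sum_sq_apply_eq_norm_sq {ι E : Type*} [Fintype ι]
    [NormedAddCommGroup E] [InnerProductSpace ℝ E] [CompleteSpace E]
    (b : OrthonormalBasis ι ℝ E) (L : StrongDual ℝ E) :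
    ∑ i, L (b i) ^ 2 = ‖L‖ ^ 2 := by
  rw [← (InnerProductSpace.toDual ℝ E).symm.norm_map, ← b.sum_sq_inner_left]
  simp_rw [InnerProductSpace.toDual_symm_apply]

section GraphMeanCurvature

variable {E : Type*} [NormedAddCommGroup E] [InnerProductSpace ℝ E] [FiniteDimensional ℝ E]
  {ι : Type*} [Fintype ι] (b : OrthonormalBasis ι ℝ E) (h : 𝓢(E, ℝ))

/-- `div (∇h / √(1 + |∇h|²))`, expanded. -/
noncomputable def graphMeanCurvature (x : E) : ℝ :=
  (1 + ‖fderiv ℝ h x‖ ^ 2) ^ (-(1:ℝ)/2) *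
    (Δ h x - (∑ i, ∑ j, ∂_{b j} (∂_{b i} h) x * ∂_{b i} h x * ∂_{b j} h x) /
      (1 + ‖fderiv ℝ h x‖ ^ 2))

theorem continuous_graphMeanCurvature : Continuous (graphMeanCurvature b h) := by
  have : Continuous (fderiv ℝ h) := (h.smooth 1).continuous_fderiv (by simp)
  have hq : Continuous fun x => 1 + ‖fderiv ℝ h x‖ ^ 2 := by fun_prop
  have hS : Continuous fun x => ∑ i, ∑ j, ∂_{b j} (∂_{b i} h) x * ∂_{b i} h x * ∂_{b j} h x :=
    continuous_finsetSum _ fun i _ => continuous_finsetSum _ fun j _ =>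
      ((∂_{b j} (∂_{b i} h)).continuous.mul (∂_{b i} h).continuous).mul (∂_{b j} h).continuous
  exact (hq.rpow_const fun x => .inl (by positivity)).mul
    ((Δ h).continuous.sub (hS.div hq fun x => by positivity))

variable {b h} {x : E}

theorem sq_hessian_grad_grad_div_le (hx : ‖fderiv ℝ h x‖ ≤ 1) :
    ((∑ i, ∑ j, ∂_{b j} (∂_{b i} h) x * ∂_{b i} h x * ∂_{b j} h x) /
      (1 + ‖fderiv ℝ h x‖ ^ 2)) ^ 2 ≤ (∑ i, ∑ j, (∂_{b j} (∂_{b i} h) x) ^ 2) / 4 := by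
  refine sq_div_one_add_le (sq_nonneg _) (pow_le_one₀ (norm_nonneg _) hx) ?_ (by positivity)
  rw [← b.sum_sq_apply_eq_norm_sq]
  exact sq_sum_sum_mul_mul_le _ _ _

theorem sq_laplacian_le (hx : ‖fderiv ℝ h x‖ ≤ 1) :
    (Δ h x) ^ 2 ≤
      4 * graphMeanCurvature b h x ^ 2 + (∑ i, ∑ j, (∂_{b j} (∂_{b i} h) x) ^ 2) / 2 :=
  sq_le_four_mul_sq_rpow_neg_one_half_mul_add (by simp)
    (by linarith [pow_le_one₀ (n := 2) (norm_nonneg _) hx]) (sq_hessian_grad_grad_div_le hx)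

theorem graphMeanCurvature_sq_le (hx : ‖fderiv ℝ h x‖ ≤ 1) :
    graphMeanCurvature b h x ^ 2 ≤
      2 * (Δ h x) ^ 2 + (∑ i, ∑ j, (∂_{b j} (∂_{b i} h) x) ^ 2) / 2 :=
  sq_rpow_neg_one_half_mul_le (by simp) (sq_hessian_grad_grad_div_le hx)

end GraphMeanCurvature

theorem integral_hessian_sq_le_eight_mul_integral_graphMeanCurvature_sq
    {E : Type*} [NormedAddCommGroup E] [InnerProductSpace ℝ E] [FiniteDimensional ℝ E]
    [MeasurableSpace E] [BorelSpace E] {μ : Measure E} [μ.IsAddHaarMeasure]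
    {ι : Type*} [Fintype ι] (b : OrthonormalBasis ι ℝ E) (h : 𝓢(E, ℝ))
    (hgrad : ∀ x, ‖fderiv ℝ h x‖ ≤ 1) :
    ∫ x, ∑ i, ∑ j, (∂_{b j} (∂_{b i} h) x) ^ 2 ∂μ ≤
      8 * ∫ x, graphMeanCurvature b h x ^ 2 ∂μ := by
  set F := fun x => ∑ i, ∑ j, (∂_{b j} (∂_{b i} h) x) ^ 2
  have hF : Integrable F μ :=
    integrable_finsetSum _ fun i _ => integrable_finsetSum _ fun j _ => integrable_sq _
  have hΔ : Integrable (fun x => (Δ h x) ^ 2) μ := integrable_sq _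
  have hH : Integrable (fun x => graphMeanCurvature b h x ^ 2) μ := by
    refine ((hΔ.const_mul 2).add (hF.div_const 2)).mono'
      ((continuous_graphMeanCurvature b h).pow 2).aestronglyMeasurable (ae_of_all _ fun x => ?_)
    rw [Real.norm_of_nonneg (sq_nonneg _)]
    exact graphMeanCurvature_sq_le (hgrad x)
  have hmain : ∫ x, F x ∂μ ≤ 4 * ∫ x, graphMeanCurvature b h x ^ 2 ∂μ + (∫ x, F x ∂μ) / 2 := by
    calc ∫ x, F x ∂μ = ∫ x, (Δ h x) ^ 2 ∂μ :=
          integral_sum_sum_lineDerivOp_sq_eq_integral_laplacian_sq b h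
      _ ≤ ∫ x, (4 * graphMeanCurvature b h x ^ 2 + F x / 2) ∂μ :=
          integral_mono hΔ ((hH.const_mul 4).add (hF.div_const 2)) fun x =>
            sq_laplacian_le (hgrad x)
      _ = 4 * ∫ x, graphMeanCurvature b h x ^ 2 ∂μ + (∫ x, F x ∂μ) / 2 := by
          rw [integral_add (hH.const_mul 4) (hF.div_const 2), integral_const_mul, integral_div]
  linarith

theorem stmt5_general (d : ℕ) (h : SchwartzMap (EuclideanSpace ℝ (Fin d)) ℝ)
    (hgrad : ∀ x, ‖fderiv ℝ (fun y => h y) x‖ ≤ 1) :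
    Real.sqrt (∫ x, ∑ i, ∑ j, (hessEntry d (fun y => h y) x i j) ^ 2) ≤
      2 * Real.sqrt 2 * Real.sqrt (∫ x,
        ((1 + ‖fderiv ℝ (fun y => h y) x‖ ^ 2) ^ (-(1:ℝ)/2) *
          ((∑ i, hessEntry d (fun y => h y) x i i) -
            (∑ i, ∑ j, hessEntry d (fun y => h y) x i j *
                fderiv ℝ (fun y => h y) x (EuclideanSpace.single i (1:ℝ)) *
                fderiv ℝ (fun y => h y) x (EuclideanSpace.single j (1:ℝ))) /
              (1 + ‖fderiv ℝ (fun y => h y) x‖ ^ 2))) ^ 2) := by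
  set b := EuclideanSpace.basisFun (Fin d) ℝ
  have hb (i : Fin d) : EuclideanSpace.single i (1:ℝ) = b i :=
    (EuclideanSpace.basisFun_apply ..).symm
  have hgradient (x i) :
      fderiv ℝ (fun y => h y) x (EuclideanSpace.single i (1:ℝ)) = ∂_{b i} h x := by
    rw [hb]; rfl
  have hhess (x i j) : hessEntry d (fun y => h y) x i j = ∂_{b j} (∂_{b i} h) x := by
    rw [hessEntry, hb, hb]; rfl
  have hlap (x) : ∑ i, ∂_{b i} (∂_{b i} h) x = Δ h x := by
    rw [laplacian_eq_sum b, sum_apply]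
  simp only [hgradient, hhess, hlap]
  calc _ ≤ √(8 * ∫ x, graphMeanCurvature b h x ^ 2) := Real.sqrt_le_sqrt
        (integral_hessian_sq_le_eight_mul_integral_graphMeanCurvature_sq b h hgrad)
    _ = _ := by
      rw [Real.sqrt_mul (by norm_num), show (8:ℝ) = 2 ^ 2 * 2 by norm_num,
        Real.sqrt_mul (by norm_num), Real.sqrt_sq (by norm_num)]
      rfl

/-- (eq:L2_h_H) of Lemma 5.4: for a Schwartz function `h` with `|∇h| ≤ 1`, the
Frobenius L² norm of the Hessian is controlled by `2√2` times the L² norm of the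
mean curvature `H = (1+|∇h|²)^{-1/2}(Δh − ⟨∇²h·∇h,∇h⟩/(1+|∇h|²))` of the graph. -/
theorem stmt5 (d : ℕ) (hd : 1 ≤ d) (h : SchwartzMap (EuclideanSpace ℝ (Fin d)) ℝ)
    (hgrad : ∀ x, ‖fderiv ℝ (fun y => h y) x‖ ≤ 1) :
    Real.sqrt (∫ x, ∑ i, ∑ j, (hessEntry d (fun y => h y) x i j) ^ 2) ≤
      2 * Real.sqrt 2 * Real.sqrt (∫ x,
        ((1 + ‖fderiv ℝ (fun y => h y) x‖ ^ 2) ^ (-(1:ℝ)/2) *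
          ((∑ i, hessEntry d (fun y => h y) x i i) -
            (∑ i, ∑ j, hessEntry d (fun y => h y) x i j *
                fderiv ℝ (fun y => h y) x (EuclideanSpace.single i (1:ℝ)) *
                fderiv ℝ (fun y => h y) x (EuclideanSpace.single j (1:ℝ))) /
              (1 + ‖fderiv ℝ (fun y => h y) x‖ ^ 2))) ^ 2) :=
  stmt5_general d h hgrad
end

section
/- There exists a universal constant C such that for every smooth compactly supported function h : ℝ² → ℝ one has ‖h‖_{L^∞(ℝ²)} ≤ C·‖h‖_{L¹(ℝ²)}^{1/5}·‖∇h‖_{L²(ℝ²)}^{2/5}·‖∇h‖_{L^∞(ℝ²)}^{2/5}. -/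
open MeasureTheory Set

open Metric Module
open scoped ENNReal NNReal

theorem ofReal_norm_eq_coe_nnnorm {F : Type*} [SeminormedAddGroup F] (a : F) :
    ENNReal.ofReal ‖a‖ = (‖a‖₊ : ℝ≥0∞) := ofReal_norm a

/-- Lemma A.5 (iv), 2D case (eq:h_infty):
`‖h‖_∞ ≤ C ‖h‖₁^{1/5} ‖∇h‖₂^{2/5} ‖∇h‖_∞^{2/5}`. -/
theorem stmt11 :
    ∃ C : ℝ, 0 < C ∧ ∀ h : EuclideanSpace ℝ (Fin 2) → ℝ,
      ContDiff ℝ (⊤ : ℕ∞) h → HasCompactSupport h →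
      eLpNorm h ⊤ volume ≤ ENNReal.ofReal C *
        eLpNorm h 1 volume ^ ((1:ℝ)/5) *
        eLpNorm (fun x => ‖fderiv ℝ h x‖) 2 volume ^ ((2:ℝ)/5) *
        eLpNorm (fun x => ‖fderiv ℝ h x‖) ⊤ volume ^ ((2:ℝ)/5) := by
  classical
  set E := EuclideanSpace ℝ (Fin 2)
  set ν : Measure E := volume with hν
  have hrank : finrank ℝ E = 2 := finrank_euclideanSpace_fin
  set CS : ℝ≥0 := eLpNormLESNormFDerivOneConst ν 2 with hCS
  set c₀ : ℝ≥0∞ := ν (ball (0 : E) 1) with hc₀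
  have hc₀pos : c₀ ≠ 0 := (measure_ball_pos ν 0 one_pos).ne'
  have hc₀top : c₀ ≠ ∞ := measure_ball_lt_top.ne
  set K : ℝ≥0∞ := 2 ^ 8 * (CS : ℝ≥0∞) ^ 2 * c₀⁻¹ with hK
  have hKtop : K ≠ ∞ := by
    refine ENNReal.mul_ne_top (ENNReal.mul_ne_top ?_ ?_) ?_
    · simp
    · simp
    · exact ENNReal.inv_ne_top.2 hc₀pos
  have hK15top : K ^ ((1:ℝ)/5) ≠ ∞ := by
    exact ENNReal.rpow_ne_top_of_nonneg (by norm_num) hKtop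
  refine ⟨max (K ^ ((1:ℝ)/5)).toReal 1, lt_of_lt_of_le one_pos (le_max_right _ _), ?_⟩
  intro h hd hc
  by_cases h0 : h = 0
  · simp [h0]
  -- basic objects
  have hh_cont : Continuous h := hd.continuous
  have hdiff : Differentiable ℝ h := hd.differentiable (by simp)
  set g : E → ℝ := fun x => ‖fderiv ℝ h x‖ with hg
  have hg_cont : Continuous g := (hd.continuous_fderiv (by simp)).norm
  have hg_cs : HasCompactSupport g := (hc.fderiv ℝ).norm
  have hg_mem : MemLp g ⊤ ν := hg_cont.memLp_top_of_hasCompactSupport hg_cs ν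
  set Ntop : ℝ≥0∞ := eLpNorm g ⊤ ν with hNtop
  have hNtoptop : Ntop ≠ ∞ := hg_mem.eLpNorm_ne_top
  set L : ℝ := Ntop.toReal with hL
  have hL0 : 0 ≤ L := ENNReal.toReal_nonneg
  have hofL : ENNReal.ofReal L = Ntop := ENNReal.ofReal_toReal hNtoptop
  -- pointwise bound on the gradient
  have hgle : ∀ x, g x ≤ L := by
    intro x
    by_contra hx
    push_neg at hx
    have hU : IsOpen {y | L < g y} := isOpen_lt continuous_const hg_cont
    have hnull : ν {y | L < g y} = 0 := by
      have hae : ∀ᵐ y ∂ν, (‖g y‖₊ : ℝ≥0∞) ≤ Ntop := by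
        rw [hNtop, eLpNorm_exponent_top]
        exact ae_le_eLpNormEssSup
      refine measure_mono_null ?_ hae
      intro y hy
      simp only [Set.mem_setOf_eq, Set.mem_compl_iff, not_le] at hy ⊢
      have hgy : 0 ≤ g y := norm_nonneg _
      calc Ntop = ENNReal.ofReal L := hofL.symm
        _ < ENNReal.ofReal (g y) := by
            exact (ENNReal.ofReal_lt_ofReal_iff (lt_of_le_of_lt hL0 hy)).2 hy
        _ = (‖g y‖₊ : ℝ≥0∞) := by
            rw [← ofReal_norm_eq_coe_nnnorm, Real.norm_of_nonneg hgy]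
    have : {y | L < g y} = ∅ := hU.eq_empty_of_measure_zero hnull
    exact absurd (this ▸ hx : x ∈ (∅ : Set E)) (Set.notMem_empty x)
  -- Lipschitz bound
  have hlip : ∀ x y : E, ‖h y - h x‖ ≤ L * ‖y - x‖ := by
    intro x y
    exact Convex.norm_image_sub_le_of_norm_fderiv_le (fun z _ => hdiff z)
      (fun z _ => hgle z) convex_univ (mem_univ x) (mem_univ y)
  -- maximum point
  obtain ⟨x₀, hx₀⟩ : ∃ x₀ : E, ∀ x, ‖h x‖ ≤ ‖h x₀‖ :=
    hh_cont.norm.exists_forall_ge_of_hasCompactSupport hc.norm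
  set M : ℝ := ‖h x₀‖ with hM
  have hMpos : 0 < M := by
    rcases Function.ne_iff.1 h0 with ⟨x, hx⟩
    exact lt_of_lt_of_le (norm_pos_iff.2 hx) (hx₀ x)
  have hLpos : 0 < L := by
    rcases hL0.eq_or_lt with hL0' | hL0'
    · exfalso
      obtain ⟨R, hR⟩ := hc.isCompact.isBounded.subset_closedBall (0 : E)
      have hy : ∃ y : E, ‖y‖ > R := by
        obtain ⟨y, hy⟩ := exists_ne (0 : E)
        refine ⟨((|R| + 1) / ‖y‖) • y, ?_⟩
        rw [norm_smul, Real.norm_of_nonneg (by positivity)]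
        rw [div_mul_cancel₀ _ (norm_ne_zero_iff.2 hy)]
        calc R ≤ |R| := le_abs_self R
          _ < |R| + 1 := by linarith
      obtain ⟨y, hy⟩ := hy
      have hy0 : h y = 0 := by
        apply image_eq_zero_of_notMem_tsupport
        intro hmem
        exact absurd (mem_closedBall_zero_iff.1 (hR hmem)) (not_le.2 hy)
      have := hlip y x₀
      rw [hy0, sub_zero, ← hL0', zero_mul] at this
      exact absurd (le_antisymm this (norm_nonneg _)) hMpos.ne'
    · exact hL0'
  -- the ball on which |h| ≥ M/2
  set ρ : ℝ := M / (2 * L) with hρ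
  have hρpos : 0 < ρ := div_pos hMpos (by positivity)
  have hball : ∀ x ∈ ball x₀ ρ, M / 2 ≤ ‖h x‖ := by
    intro x hx
    have h1 : ‖h x - h x₀‖ ≤ L * ‖x - x₀‖ := hlip x₀ x
    have h2 : ‖x - x₀‖ < ρ := by rwa [mem_ball, dist_eq_norm] at hx
    have h3 : L * ‖x - x₀‖ ≤ L * ρ := by nlinarith [norm_nonneg (x - x₀)]
    have h4 : L * ρ = M / 2 := by
      rw [hρ, mul_div_assoc', div_eq_iff (by positivity)]
      ring
    have h5 : M - ‖h x‖ ≤ ‖h x - h x₀‖ := by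
      have := norm_sub_norm_le (h x₀) (h x)
      rw [← hM] at this
      calc M - ‖h x‖ ≤ ‖h x₀ - h x‖ := by linarith [le_abs_self (‖h x₀‖ - ‖h x‖), this]
        _ = ‖h x - h x₀‖ := norm_sub_rev _ _
    linarith
  -- ENNReal quantities
  set m : ℝ≥0∞ := ENNReal.ofReal M with hm
  have hm0 : m ≠ 0 := by simp [hm, hMpos]
  have hmtop : m ≠ ∞ := ENNReal.ofReal_ne_top
  set N1 : ℝ≥0∞ := eLpNorm h 1 ν with hN1
  set N2 : ℝ≥0∞ := eLpNorm g 2 ν with hN2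
  have h2cast : ∀ a : ℝ≥0∞, a ^ (2:ℝ) = a ^ (2:ℕ) := fun a => by
    rw [show (2:ℝ) = ((2:ℕ):ℝ) by norm_num, ENNReal.rpow_natCast]
  -- the function u = h²
  set u : E → ℝ := fun x => h x * h x with hu_def
  have hu : ContDiff ℝ 1 u := (hd.mul hd).of_le (by simp)
  have hu_cs : HasCompactSupport u := hc.mul_left
  have hu_cont : Continuous u := hh_cont.mul hh_cont
  set I4 : ℝ≥0∞ := ∫⁻ x, (‖u x‖₊ : ℝ≥0∞) ^ (2:ℕ) ∂ν with hI4
  -- lower bound for I4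
  have hlow : ENNReal.ofReal ((M/2)^4) * (ENNReal.ofReal (ρ^2) * c₀) ≤ I4 := by
    have hballvol : ν (ball x₀ ρ) = ENNReal.ofReal (ρ ^ 2) * c₀ := by
      have := Measure.addHaar_ball ν x₀ hρpos.le
      rwa [hrank] at this
    calc ENNReal.ofReal ((M/2)^4) * (ENNReal.ofReal (ρ^2) * c₀)
        = ∫⁻ _ in ball x₀ ρ, ENNReal.ofReal ((M/2)^4) ∂ν := by
          rw [setLIntegral_const, hballvol]
      _ ≤ ∫⁻ x in ball x₀ ρ, (‖u x‖₊ : ℝ≥0∞) ^ (2:ℕ) ∂ν := by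
          refine setLIntegral_mono (by fun_prop) ?_
          intro x hx
          have h1 : M/2 ≤ ‖h x‖ := hball x hx
          have hux : ‖u x‖ = ‖h x‖ * ‖h x‖ := by
            simp only [hu_def]; exact norm_mul _ _
          have h2 : (M/2)^4 ≤ ‖u x‖^2 := by
            have hnn : (0:ℝ) ≤ M/2 := by positivity
            calc (M/2)^4 = ((M/2)^2)^2 := by ring
              _ ≤ (‖h x‖^2)^2 := by
                  refine pow_le_pow_left₀ (by positivity) ?_ 2
                  exact pow_le_pow_left₀ hnn h1 2
              _ = ‖u x‖^2 := by rw [hux]; ring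
          calc ENNReal.ofReal ((M/2)^4) ≤ ENNReal.ofReal (‖u x‖^2) :=
                ENNReal.ofReal_le_ofReal h2
            _ = ENNReal.ofReal ‖u x‖ ^ (2:ℕ) := ENNReal.ofReal_pow (norm_nonneg _) 2
            _ = (‖u x‖₊ : ℝ≥0∞) ^ (2:ℕ) := by rw [ofReal_norm_eq_coe_nnnorm]
      _ ≤ I4 := setLIntegral_le_lintegral _ _
  -- Sobolev inequality for u
  have hp2 : NNReal.HolderConjugate (finrank ℝ E) 2 := by
    rw [hrank]
    exact_mod_cast NNReal.HolderConjugate.two_two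
  have hSob : eLpNorm u 2 ν ≤ (CS : ℝ≥0∞) * eLpNorm (fderiv ℝ u) 1 ν := by
    have := eLpNorm_le_eLpNorm_fderiv_one ν hu hu_cs hp2
    simpa [hCS] using this
  have h2norm : ∀ f : E → ℝ, eLpNorm f 2 ν =
      (∫⁻ x, (‖f x‖₊ : ℝ≥0∞) ^ (2:ℝ) ∂ν) ^ ((1:ℝ)/2) := by
    intro f
    rw [eLpNorm_eq_lintegral_rpow_enorm_toReal (by norm_num) (by norm_num)]
    norm_num
    rfl
  have hI4eq : I4 = eLpNorm u 2 ν ^ (2:ℝ) := by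
    rw [h2norm u, ← ENNReal.rpow_mul]
    norm_num
    rfl
  -- bound on the derivative of u
  have hdu : ∀ x, (‖fderiv ℝ u x‖₊ : ℝ≥0∞) ≤
      2 * ((‖h x‖₊ : ℝ≥0∞) * (‖fderiv ℝ h x‖₊ : ℝ≥0∞)) := by
    intro x
    have hreal : ‖fderiv ℝ u x‖ ≤ 2 * (‖h x‖ * ‖fderiv ℝ h x‖) := by
      have hfd : fderiv ℝ u x = h x • fderiv ℝ h x + h x • fderiv ℝ h x :=
        fderiv_mul (hdiff x) (hdiff x)
      rw [hfd]
      calc ‖h x • fderiv ℝ h x + h x • fderiv ℝ h x‖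
          ≤ ‖h x • fderiv ℝ h x‖ + ‖h x • fderiv ℝ h x‖ := norm_add_le _ _
        _ = 2 * (‖h x‖ * ‖fderiv ℝ h x‖) := by rw [norm_smul]; ring
    calc (‖fderiv ℝ u x‖₊ : ℝ≥0∞) = ENNReal.ofReal ‖fderiv ℝ u x‖ :=
          (ofReal_norm_eq_coe_nnnorm _).symm
      _ ≤ ENNReal.ofReal (2 * (‖h x‖ * ‖fderiv ℝ h x‖)) := ENNReal.ofReal_le_ofReal hreal
      _ = 2 * (ENNReal.ofReal ‖h x‖ * ENNReal.ofReal ‖fderiv ℝ h x‖) := by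
          rw [ENNReal.ofReal_mul (by norm_num), ENNReal.ofReal_mul (norm_nonneg _)]
          norm_num
      _ = 2 * ((‖h x‖₊ : ℝ≥0∞) * (‖fderiv ℝ h x‖₊ : ℝ≥0∞)) := by
          rw [ofReal_norm_eq_coe_nnnorm, ofReal_norm_eq_coe_nnnorm]
  have hJ : eLpNorm (fderiv ℝ u) 1 ν ≤
      2 * ∫⁻ x, (‖h x‖₊ : ℝ≥0∞) * (‖fderiv ℝ h x‖₊ : ℝ≥0∞) ∂ν := by
    rw [eLpNorm_one_eq_lintegral_enorm]
    calc ∫⁻ x, (‖fderiv ℝ u x‖₊ : ℝ≥0∞) ∂ν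
        ≤ ∫⁻ x, 2 * ((‖h x‖₊ : ℝ≥0∞) * (‖fderiv ℝ h x‖₊ : ℝ≥0∞)) ∂ν :=
          lintegral_mono hdu
      _ = 2 * ∫⁻ x, (‖h x‖₊ : ℝ≥0∞) * (‖fderiv ℝ h x‖₊ : ℝ≥0∞) ∂ν :=
          lintegral_const_mul' _ _ (by norm_num)
  -- Cauchy-Schwarz
  have hfd_cont : Continuous (fderiv ℝ h) := hd.continuous_fderiv (by simp)
  have hCS2 : ∫⁻ x, (‖h x‖₊ : ℝ≥0∞) * (‖fderiv ℝ h x‖₊ : ℝ≥0∞) ∂ν ≤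
      (∫⁻ x, (‖h x‖₊ : ℝ≥0∞) ^ (2:ℝ) ∂ν) ^ ((1:ℝ)/2) *
      (∫⁻ x, (‖fderiv ℝ h x‖₊ : ℝ≥0∞) ^ (2:ℝ) ∂ν) ^ ((1:ℝ)/2) := by
    have hpq : Real.HolderConjugate 2 2 := Real.HolderConjugate.two_two
    exact ENNReal.lintegral_mul_le_Lp_mul_Lq ν hpq
      (by fun_prop) (by fun_prop)
  have hfirst : (∫⁻ x, (‖h x‖₊ : ℝ≥0∞) ^ (2:ℝ) ∂ν) ^ ((1:ℝ)/2) ≤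
      (m * N1) ^ ((1:ℝ)/2) := by
    refine ENNReal.rpow_le_rpow ?_ (by norm_num)
    calc ∫⁻ x, (‖h x‖₊ : ℝ≥0∞) ^ (2:ℝ) ∂ν
        ≤ ∫⁻ x, m * (‖h x‖₊ : ℝ≥0∞) ∂ν := by
          refine lintegral_mono fun x => ?_
          rw [h2cast, pow_two]
          refine mul_le_mul_left ?_ _
          rw [← ofReal_norm_eq_coe_nnnorm, hm]
          exact ENNReal.ofReal_le_ofReal (hx₀ x)
      _ = m * ∫⁻ x, (‖h x‖₊ : ℝ≥0∞) ∂ν := lintegral_const_mul' _ _ hmtop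
      _ = m * N1 := by rw [hN1, eLpNorm_one_eq_lintegral_enorm]; rfl
  have hsecond : (∫⁻ x, (‖fderiv ℝ h x‖₊ : ℝ≥0∞) ^ (2:ℝ) ∂ν) ^ ((1:ℝ)/2) = N2 := by
    have hgnn : ∀ x, (‖g x‖₊ : ℝ≥0∞) = (‖fderiv ℝ h x‖₊ : ℝ≥0∞) := by
      intro x; rw [hg]; simp [nnnorm_norm]
    rw [hN2, h2norm g]
    congr 1
    exact lintegral_congr fun x => by rw [hgnn x]
  -- combine: I4 ≤ CS² · 4 · m · N1 · N2²
  have hchain : I4 ≤ (CS : ℝ≥0∞) ^ (2:ℝ) * 2 ^ (2:ℝ) * (m * N1) * N2 ^ (2:ℝ) := by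
    have hJ2 : eLpNorm (fderiv ℝ u) 1 ν ≤ 2 * ((m * N1) ^ ((1:ℝ)/2) * N2) := by
      calc eLpNorm (fderiv ℝ u) 1 ν
          ≤ 2 * ∫⁻ x, (‖h x‖₊ : ℝ≥0∞) * (‖fderiv ℝ h x‖₊ : ℝ≥0∞) ∂ν := hJ
        _ ≤ 2 * ((m * N1) ^ ((1:ℝ)/2) * N2) := by
            refine mul_le_mul_right ?_ _
            calc ∫⁻ x, (‖h x‖₊ : ℝ≥0∞) * (‖fderiv ℝ h x‖₊ : ℝ≥0∞) ∂ν
                ≤ (∫⁻ x, (‖h x‖₊ : ℝ≥0∞) ^ (2:ℝ) ∂ν) ^ ((1:ℝ)/2) *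
                  (∫⁻ x, (‖fderiv ℝ h x‖₊ : ℝ≥0∞) ^ (2:ℝ) ∂ν) ^ ((1:ℝ)/2) := hCS2
              _ ≤ (m * N1) ^ ((1:ℝ)/2) * N2 := by
                  rw [hsecond]
                  exact mul_le_mul_left hfirst _
    calc I4 = eLpNorm u 2 ν ^ (2:ℝ) := hI4eq
      _ ≤ ((CS : ℝ≥0∞) * (2 * ((m * N1) ^ ((1:ℝ)/2) * N2))) ^ (2:ℝ) := by
          refine ENNReal.rpow_le_rpow ?_ (by norm_num)
          exact le_trans hSob (mul_le_mul_right hJ2 _)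
      _ = (CS : ℝ≥0∞) ^ (2:ℝ) * 2 ^ (2:ℝ) * (m * N1) * N2 ^ (2:ℝ) := by
          rw [ENNReal.mul_rpow_of_nonneg _ _ (by norm_num : (0:ℝ) ≤ 2),
            ENNReal.mul_rpow_of_nonneg _ _ (by norm_num : (0:ℝ) ≤ 2),
            ENNReal.mul_rpow_of_nonneg _ _ (by norm_num : (0:ℝ) ≤ 2),
            ← ENNReal.rpow_mul]
          norm_num
          ring
  -- assemble: m⁶ c₀ ≤ 2⁸ CS² m N1 N2² Ntop²
  have hL2 : ENNReal.ofReal (2^6 * L^2) = 2^6 * Ntop^(2:ℕ) := by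
    rw [ENNReal.ofReal_mul (by norm_num), ENNReal.ofReal_pow hL0, hofL]
    norm_num
  have hfinal6 : m ^ (6:ℕ) * c₀ ≤
      2^8 * (CS : ℝ≥0∞)^(2:ℝ) * m * N1 * N2^(2:ℝ) * Ntop^(2:ℕ) := by
    have hsplit : m ^ (6:ℕ) = ENNReal.ofReal (M^6 / (2^6 * L^2)) *
        ENNReal.ofReal (2^6 * L^2) := by
      rw [← ENNReal.ofReal_mul (by positivity), hm, ← ENNReal.ofReal_pow hMpos.le]
      congr 1
      field_simp
    have heq1 : ENNReal.ofReal (M^6 / (2^6 * L^2)) =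
        ENNReal.ofReal ((M/2)^4) * ENNReal.ofReal (ρ^2) := by
      rw [← ENNReal.ofReal_mul (by positivity)]
      congr 1
      rw [hρ]
      field_simp
    calc m ^ (6:ℕ) * c₀
        = (ENNReal.ofReal ((M/2)^4) * (ENNReal.ofReal (ρ^2) * c₀)) *
          ENNReal.ofReal (2^6 * L^2) := by rw [hsplit, heq1]; ring
      _ ≤ I4 * ENNReal.ofReal (2^6 * L^2) := mul_le_mul_left hlow _
      _ ≤ ((CS : ℝ≥0∞) ^ (2:ℝ) * 2 ^ (2:ℝ) * (m * N1) * N2 ^ (2:ℝ)) *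
          (2^6 * Ntop^(2:ℕ)) := by
          rw [hL2]
          exact mul_le_mul_left hchain _
      _ = 2^8 * (CS : ℝ≥0∞)^(2:ℝ) * m * N1 * N2^(2:ℝ) * Ntop^(2:ℕ) := by
          rw [show ((2:ℝ≥0∞)) ^ (2:ℝ) = 2^(2:ℕ) from h2cast 2]
          ring
  have hc1 : c₀⁻¹ * c₀ = 1 := ENNReal.inv_mul_cancel hc₀pos hc₀top
  have hKCS : (K : ℝ≥0∞) = 2^8 * (CS : ℝ≥0∞)^(2:ℝ) * c₀⁻¹ := by
    rw [hK, show ((CS:ℝ≥0∞)) ^ (2:ℝ) = (CS:ℝ≥0∞)^(2:ℕ) from h2cast _]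
  have hfinal5 : m ^ (5:ℕ) ≤ K * (N1 * N2^(2:ℝ) * Ntop^(2:ℕ)) := by
    have hmc0 : m * c₀ ≠ 0 := mul_ne_zero hm0 hc₀pos
    have hmc0top : m * c₀ ≠ ∞ := ENNReal.mul_ne_top hmtop hc₀top
    rw [← ENNReal.mul_le_mul_iff_left hmc0 hmc0top]
    calc m ^ (5:ℕ) * (m * c₀) = m ^ (6:ℕ) * c₀ := by ring
      _ ≤ 2^8 * (CS : ℝ≥0∞)^(2:ℝ) * m * N1 * N2^(2:ℝ) * Ntop^(2:ℕ) := hfinal6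
      _ = 2^8 * (CS : ℝ≥0∞)^(2:ℝ) * m * N1 * N2^(2:ℝ) * Ntop^(2:ℕ) *
          (c₀⁻¹ * c₀) := by rw [hc1, mul_one]
      _ = K * (N1 * N2^(2:ℝ) * Ntop^(2:ℕ)) * (m * c₀) := by rw [hKCS]; ring
  -- take fifth root
  have hroot : m ≤ K ^ ((1:ℝ)/5) * (N1 ^ ((1:ℝ)/5) * N2 ^ ((2:ℝ)/5) *
      Ntop ^ ((2:ℝ)/5)) := by
    have h5 : m = (m ^ (5:ℕ)) ^ ((1:ℝ)/5) := by
      rw [← ENNReal.rpow_natCast m 5, ← ENNReal.rpow_mul]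
      norm_num
    have hdist : ∀ a b c d : ℝ≥0∞, (a * (b * c^(2:ℝ) * d^(2:ℕ)))^((1:ℝ)/5) =
        a^((1:ℝ)/5) * (b^((1:ℝ)/5) * c^((2:ℝ)/5) * d^((2:ℝ)/5)) := by
      intro a b c d
      rw [← ENNReal.rpow_natCast d 2]
      rw [ENNReal.mul_rpow_of_nonneg _ _ (by norm_num : (0:ℝ) ≤ 1/5)]
      rw [ENNReal.mul_rpow_of_nonneg _ _ (by norm_num : (0:ℝ) ≤ 1/5)]
      rw [ENNReal.mul_rpow_of_nonneg _ _ (by norm_num : (0:ℝ) ≤ 1/5)]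
      rw [← ENNReal.rpow_mul c, ← ENNReal.rpow_mul d]
      norm_num
    rw [h5, ← hdist]
    exact ENNReal.rpow_le_rpow hfinal5 (by norm_num)
  -- conclude
  have hlhs : eLpNorm h ⊤ ν ≤ m := by
    rw [eLpNorm_exponent_top, hm]
    exact eLpNormEssSup_le_of_ae_bound (Filter.Eventually.of_forall hx₀)
  have hCfin : K ^ ((1:ℝ)/5) ≤ ENNReal.ofReal (max (K ^ ((1:ℝ)/5)).toReal 1) := by
    conv_lhs => rw [← ENNReal.ofReal_toReal hK15top]
    exact ENNReal.ofReal_le_ofReal (le_max_left _ _)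
  calc eLpNorm h ⊤ ν ≤ m := hlhs
    _ ≤ K ^ ((1:ℝ)/5) * (N1 ^ ((1:ℝ)/5) * N2 ^ ((2:ℝ)/5) * Ntop ^ ((2:ℝ)/5)) := hroot
    _ ≤ ENNReal.ofReal (max (K ^ ((1:ℝ)/5)).toReal 1) *
        (N1 ^ ((1:ℝ)/5) * N2 ^ ((2:ℝ)/5) * Ntop ^ ((2:ℝ)/5)) :=
          mul_le_mul_left hCfin _
    _ = ENNReal.ofReal (max (K ^ ((1:ℝ)/5)).toReal 1) * N1 ^ ((1:ℝ)/5) *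
        N2 ^ ((2:ℝ)/5) * Ntop ^ ((2:ℝ)/5) := by ring
end
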